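/- Let y* = 2, let z₀ ∈ [0,1), and let (ρ, ω) be an inner LP-type solution on (z₀, 1] (so in particular ρ(1) = ω(1) = 1/2, ρ'(1) = −1/2, ω'(1) = 0, and 1 − 4z²ω(z)² > 0 on (z₀,1)). Then ω(z) > 1/2 for all z ∈ (z₀, 1). -/

import Mathlib

/-- The rescaled self-similar isothermal Euler–Poisson system with parameter `y = y*`,
at the point `z`. -/
def EPSys (y : ℝ) (ρ ω : ℝ → ℝ) (z : ℝ) : Prop :=
  deriv ρ z =
    -(2 * y ^ 2 * z * ω z * ρ z * (ρ z - ω z)) / (1 - y ^ 2 * z ^ 2 * (ω z) ^ 2) ∧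
  deriv ω z =
    (1 - 3 * ω z) / z +
      2 * y ^ 2 * z * (ω z) ^ 2 * (ρ z - ω z) / (1 - y ^ 2 * z ^ 2 * (ω z) ^ 2)

/-- The multiplied form of the system, valid also at the sonic point. -/
def MultSys (y : ℝ) (ρ ω : ℝ → ℝ) (z : ℝ) : Prop :=
  deriv ρ z * (1 - y ^ 2 * z ^ 2 * (ω z) ^ 2)
    + 2 * y ^ 2 * z * ω z * ρ z * (ρ z - ω z) = 0 ∧
  z * deriv ω z * (1 - y ^ 2 * z ^ 2 * (ω z) ^ 2)
    - (1 - 3 * ω z) * (1 - y ^ 2 * z ^ 2 * (ω z) ^ 2)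
    - 2 * y ^ 2 * z ^ 2 * (ω z) ^ 2 * (ρ z - ω z) = 0

/-- An inner LP-type solution on `(z₀, 1]`: continuous on `(z₀,1]`, real analytic on a
left-neighbourhood of `z = 1` where it solves the multiplied system with the LP
conditions, differentiable on `(z₀,1)` where it solves the system, and subsonic there. -/
def InnerLPSol (y z₀ : ℝ) (ρ ω : ℝ → ℝ) : Prop :=
  ContinuousOn ρ (Set.Ioc z₀ 1) ∧ ContinuousOn ω (Set.Ioc z₀ 1) ∧
  (∃ r : ℝ, 0 < r ∧ r < 1 ∧
    AnalyticOnNhd ℝ ρ (Set.Ioc (1 - r) 1) ∧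
    AnalyticOnNhd ℝ ω (Set.Ioc (1 - r) 1) ∧
    (∀ z ∈ Set.Ioc (1 - r) 1, MultSys y ρ ω z)) ∧
  ρ 1 = 1 / y ∧ ω 1 = 1 / y ∧ deriv ρ 1 = -(1 / y) ∧ deriv ω 1 = 1 - 2 / y ∧
  (∀ z ∈ Set.Ioo z₀ 1,
    DifferentiableAt ℝ ρ z ∧ DifferentiableAt ℝ ω z ∧ EPSys y ρ ω z) ∧
  (∀ z ∈ Set.Ioo z₀ 1, 0 < 1 - y ^ 2 * z ^ 2 * (ω z) ^ 2)

/-!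
Write `q z = z * ρ z`. The region `ω > 1/2, q < 1/2` cannot be left as `z` decreases: on its
edge `ω = 1/2, q ≤ 1/2` the system forces `ω' < 0`, and on its edge `q = 1/2` it gives
`z (1 - 4 z² ω²) q' = 2 (z ω - 1/2)² > 0`, the right side being nonzero while the flow is
subsonic. The solution starts inside the region: at the sonic point both `ω - 1/2` and `q - 1/2`
vanish together with their first derivatives, and differentiating the multiplied system twice
gives `ρ''(1) = ω''(1) = 1/2`, hence `ω''(1) > 0` and `q''(1) = -1/2 < 0`.
-/

open Set Filter Topology

def HasJet2At (f : ℝ → ℝ) (a₀ a₁ a₂ x : ℝ) : Prop :=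
  AnalyticAt ℝ f x ∧ f x = a₀ ∧ deriv f x = a₁ ∧ deriv (deriv f) x = a₂

theorem AnalyticAt.hasJet2At {f : ℝ → ℝ} {x : ℝ} (hf : AnalyticAt ℝ f x) :
    HasJet2At f (f x) (deriv f x) (deriv (deriv f) x) x :=
  ⟨hf, rfl, rfl, rfl⟩

namespace HasJet2At

variable {f g : ℝ → ℝ} {x a₀ a₁ a₂ b₀ b₁ b₂ : ℝ}

theorem const (c x : ℝ) : HasJet2At (fun _ => c) c 0 0 x :=
  ⟨analyticAt_const, rfl, by simp, by simp⟩

theorem id (x : ℝ) : HasJet2At (fun y => y) x 1 0 x :=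
  ⟨analyticAt_id, rfl, by simp, by simp⟩

theorem add (hf : HasJet2At f a₀ a₁ a₂ x) (hg : HasJet2At g b₀ b₁ b₂ x) :
    HasJet2At (fun y => f y + g y) (a₀ + b₀) (a₁ + b₁) (a₂ + b₂) x := by
  obtain ⟨hfa, rfl, rfl, rfl⟩ := hf
  obtain ⟨hga, rfl, rfl, rfl⟩ := hg
  have hderiv : deriv (fun y => f y + g y) =ᶠ[𝓝 x] fun y => deriv f y + deriv g y := by
    filter_upwards [hfa.eventually_analyticAt, hga.eventually_analyticAt] with y hf hg
    exact deriv_add hf.differentiableAt hg.differentiableAt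
  refine ⟨hfa.add hga, rfl, hderiv.eq_of_nhds, ?_⟩
  rw [hderiv.deriv_eq]
  exact deriv_add hfa.deriv.differentiableAt hga.deriv.differentiableAt

theorem sub (hf : HasJet2At f a₀ a₁ a₂ x) (hg : HasJet2At g b₀ b₁ b₂ x) :
    HasJet2At (fun y => f y - g y) (a₀ - b₀) (a₁ - b₁) (a₂ - b₂) x := by
  obtain ⟨hfa, rfl, rfl, rfl⟩ := hf
  obtain ⟨hga, rfl, rfl, rfl⟩ := hg
  have hderiv : deriv (fun y => f y - g y) =ᶠ[𝓝 x] fun y => deriv f y - deriv g y := by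
    filter_upwards [hfa.eventually_analyticAt, hga.eventually_analyticAt] with y hf hg
    exact deriv_sub hf.differentiableAt hg.differentiableAt
  refine ⟨hfa.sub hga, rfl, hderiv.eq_of_nhds, ?_⟩
  rw [hderiv.deriv_eq]
  exact deriv_sub hfa.deriv.differentiableAt hga.deriv.differentiableAt

theorem mul (hf : HasJet2At f a₀ a₁ a₂ x) (hg : HasJet2At g b₀ b₁ b₂ x) :
    HasJet2At (fun y => f y * g y) (a₀ * b₀) (a₁ * b₀ + a₀ * b₁)
      (a₂ * b₀ + 2 * a₁ * b₁ + a₀ * b₂) x := by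
  obtain ⟨hfa, rfl, rfl, rfl⟩ := hf
  obtain ⟨hga, rfl, rfl, rfl⟩ := hg
  have hderiv : deriv (fun y => f y * g y) =ᶠ[𝓝 x]
      fun y => deriv f y * g y + f y * deriv g y := by
    filter_upwards [hfa.eventually_analyticAt, hga.eventually_analyticAt] with y hf hg
    exact deriv_mul hf.differentiableAt hg.differentiableAt
  refine ⟨hfa.mul hga, rfl, hderiv.eq_of_nhds, ?_⟩
  rw [hderiv.deriv_eq]
  have hf' := hfa.differentiableAt.hasDerivAt
  have hg' := hga.differentiableAt.hasDerivAt
  rw [((hfa.deriv.differentiableAt.hasDerivAt.fun_mul hg').fun_add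
    (hf'.fun_mul hga.deriv.differentiableAt.hasDerivAt)).deriv]
  ring

theorem eq_zero_of_eventually_nhdsLT (hf : HasJet2At f a₀ a₁ a₂ x)
    (h : ∀ᶠ y in 𝓝[<] x, f y = 0) : a₀ = 0 ∧ a₁ = 0 ∧ a₂ = 0 := by
  obtain ⟨hfa, rfl, rfl, rfl⟩ := hf
  have hzero : f =ᶠ[𝓝 x] 0 :=
    hfa.frequently_zero_iff_eventually_zero.1 (h.frequently.filter_mono (nhdsLT_le_nhdsNE x))
  exact ⟨hzero.eq_of_nhds, by simpa using hzero.deriv_eq,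
    by simpa using hzero.deriv.deriv_eq⟩

theorem eventually_nhdsLT_lt (hf : HasJet2At f a₀ a₁ a₂ x) (ha₁ : a₁ = 0) (ha₂ : 0 < a₂) :
    ∀ᶠ y in 𝓝[<] x, a₀ < f y := by
  obtain ⟨hfa, rfl, rfl, rfl⟩ := hf
  have hneg : ∀ᶠ y in 𝓝[<] x, deriv f y < 0 :=
    deriv_neg_left_of_sign_deriv <| nhdsWithin_le_nhds <|
      eventually_nhdsWithin_sign_eq_of_deriv_pos ha₂ ha₁
  have hcont : ∀ᶠ y in 𝓝[<] x, ContinuousAt f y :=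
    (hfa.eventually_analyticAt.mono fun _ h => h.continuousAt).filter_mono nhdsWithin_le_nhds
  obtain ⟨l, hl, hsub⟩ := mem_nhdsLT_iff_exists_Ioo_subset.1 (hneg.and hcont)
  filter_upwards [Ioo_mem_nhdsLT hl] with y hy
  have hanti : StrictAntiOn f (Icc y x) := by
    refine strictAntiOn_of_deriv_neg (convex_Icc y x) (fun t ht => ?_) ?_
    · rcases ht.2.eq_or_lt with rfl | htx
      · exact hfa.continuousAt.continuousWithinAt
      · exact (hsub ⟨hy.1.trans_le ht.1, htx⟩).2.continuousWithinAt
    · rw [interior_Icc]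
      exact fun t ht => (hsub ⟨hy.1.trans ht.1, ht.2⟩).1
  exact hanti ⟨le_rfl, hy.2.le⟩ ⟨hy.2.le, le_rfl⟩ hy.2

theorem eventually_nhdsLT_gt (hf : HasJet2At f a₀ a₁ a₂ x) (ha₁ : a₁ = 0) (ha₂ : a₂ < 0) :
    ∀ᶠ y in 𝓝[<] x, f y < a₀ := by
  filter_upwards [((const 0 x).sub hf).eventually_nhdsLT_lt (by simp [ha₁]) (by linarith)]
    with y hy
  linarith

end HasJet2At

theorem deriv_nonneg_of_forall_Ioo_ge {f : ℝ → ℝ} {c b : ℝ} (hcb : c < b)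
    (hf : ∀ y ∈ Ioo c b, f c ≤ f y) : 0 ≤ deriv f c := by
  by_cases hd : DifferentiableAt ℝ f c
  · refine ge_of_tendsto ((hasDerivAt_iff_tendsto_slope.1 hd.hasDerivAt).mono_left
      (nhdsGT_le_nhdsNE c)) ?_
    filter_upwards [Ioo_mem_nhdsGT hcb] with y hy
    rw [slope_def_field]
    exact div_nonneg (sub_nonneg.2 (hf y hy)) (sub_nonneg.2 hy.1.le)
  · rw [deriv_zero_of_not_differentiableAt hd]

theorem deriv_nonpos_of_forall_Ioo_le {f : ℝ → ℝ} {c b : ℝ} (hcb : c < b)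
    (hf : ∀ y ∈ Ioo c b, f y ≤ f c) : deriv f c ≤ 0 := by
  simpa [deriv.neg] using
    deriv_nonneg_of_forall_Ioo_ge (f := fun y => -f y) hcb fun y hy => neg_le_neg (hf y hy)

theorem forall_Ioo_pos_of_eventually_nhdsLT_pos {g : ℝ → ℝ} {a b : ℝ}
    (hg : ContinuousOn g (Ioo a b)) (hb : ∀ᶠ z in 𝓝[<] b, 0 < g z)
    (hexit : ∀ c ∈ Ioo a b, (∀ z ∈ Ioo c b, 0 < g z) → g c ≠ 0) :
    ∀ z ∈ Ioo a b, 0 < g z := by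
  intro z hz
  by_contra! hgz
  obtain ⟨l, hl, hsub⟩ := mem_nhdsLT_iff_exists_Ioo_subset.1 hb
  obtain ⟨t, hlt, htb⟩ := exists_between (max_lt hl hz.2)
  set K := Icc z t ∩ g ⁻¹' Iic 0
  have hKbdd : BddAbove K := bddAbove_Icc.mono inter_subset_left
  have hzK : z ∈ K := ⟨⟨le_rfl, (le_max_right _ _).trans hlt.le⟩, hgz⟩
  have hcK : sSup K ∈ K :=
    ((hg.mono (Icc_subset_Ioo hz.1 htb)).preimage_isClosed_of_isClosed isClosed_Icc
      isClosed_Iic).csSup_mem ⟨z, hzK⟩ hKbdd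
  set c := sSup K
  have hc : c ∈ Ioo a b := ⟨hz.1.trans_le hcK.1.1, hcK.1.2.trans_lt htb⟩
  have hright : ∀ y ∈ Ioo c b, 0 < g y := by
    intro y hy
    by_contra! hgy
    rcases le_or_gt y t with hyt | hty
    · exact (le_csSup hKbdd ⟨⟨hcK.1.1.trans hy.1.le, hyt⟩, hgy⟩).not_gt hy.1
    · exact hgy.not_gt (hsub ⟨(le_max_left _ _).trans_lt (hlt.trans hty), hy.2⟩)
  have hc0 : 0 ≤ g c :=
    ge_of_tendsto ((hg.continuousAt (Ioo_mem_nhds hc.1 hc.2)).tendsto.mono_left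
      nhdsWithin_le_nhds) (by filter_upwards [Ioo_mem_nhdsGT hc.2] with y hy using (hright y hy).le)
  exact hexit c hc hright (le_antisymm hcK.2 hc0)

/-- The factor `1 - 4 z² ω²` vanishes at `z = 1`, so the first derivative of the multiplied system
there does not see `ρ''(1), ω''(1)`; they are read off from its second derivative. -/
theorem InnerLPSol.deriv_deriv_one {z₀ : ℝ} {ρ ω : ℝ → ℝ} (h : InnerLPSol 2 z₀ ρ ω) :
    deriv (deriv ρ) 1 = 1 / 2 ∧ deriv (deriv ω) 1 = 1 / 2 := by
  obtain ⟨-, -, ⟨r, hr₀, -, hρa, hωa, hms⟩, hρ1, hω1, hρ'1, hω'1, -, -⟩ := h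
  have h1 : (1 : ℝ) ∈ Ioc (1 - r) 1 := ⟨by linarith, le_rfl⟩
  have hnear : ∀ᶠ z in 𝓝[<] (1 : ℝ), MultSys 2 ρ ω z := by
    filter_upwards [Ioo_mem_nhdsLT (by linarith : 1 - r < 1)] with z hz
    exact hms z (Ioo_subset_Ioc_self hz)
  have hρ : HasJet2At ρ (1 / 2) (-(1 / 2)) (deriv (deriv ρ) 1) 1 := ⟨hρa 1 h1, hρ1, hρ'1, rfl⟩
  have hω : HasJet2At ω (1 / 2) 0 (deriv (deriv ω) 1) 1 :=
    ⟨hωa 1 h1, hω1, by rw [hω'1]; norm_num, rfl⟩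
  have hρ' := (hρa 1 h1).deriv.hasJet2At
  have hω' := (hωa 1 h1).deriv.hasJet2At
  have hid := HasJet2At.id 1
  have hD := (HasJet2At.const 1 1).sub ((HasJet2At.const 4 1).mul ((hid.mul hid).mul (hω.mul hω)))
  have hF₁ := (hρ'.mul hD).add
    (((((HasJet2At.const 8 1).mul hid).mul hω).mul hρ).mul (hρ.sub hω))
  have hF₂ := (((hid.mul hω').mul hD).sub
    (((HasJet2At.const 1 1).sub ((HasJet2At.const 3 1).mul hω)).mul hD)).sub
    ((((HasJet2At.const 8 1).mul (hid.mul hid)).mul (hω.mul hω)).mul (hρ.sub hω))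
  obtain ⟨-, -, e₁⟩ := hF₁.eq_zero_of_eventually_nhdsLT <| by
    filter_upwards [hnear] with z hz
    linear_combination hz.1
  obtain ⟨-, -, e₂⟩ := hF₂.eq_zero_of_eventually_nhdsLT <| by
    filter_upwards [hnear] with z hz
    linear_combination hz.2
  norm_num [hρ'1, hω'1] at e₁ e₂
  constructor <;> linarith

theorem InnerLPSol.eventually_trapped_nhdsLT_one {z₀ : ℝ} {ρ ω : ℝ → ℝ}
    (h : InnerLPSol 2 z₀ ρ ω) :
    ∀ᶠ z in 𝓝[<] (1 : ℝ), 1 / 2 < ω z ∧ z * ρ z < 1 / 2 := by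
  obtain ⟨hρ'', hω''⟩ := h.deriv_deriv_one
  obtain ⟨-, -, ⟨r, hr₀, -, hρa, hωa, -⟩, hρ1, hω1, hρ'1, hω'1, -, -⟩ := h
  have h1 : (1 : ℝ) ∈ Ioc (1 - r) 1 := ⟨by linarith, le_rfl⟩
  have hρ : HasJet2At ρ (1 / 2) (-(1 / 2)) (1 / 2) 1 := ⟨hρa 1 h1, hρ1, hρ'1, hρ''⟩
  have hω : HasJet2At ω (1 / 2) (1 - 2 / 2) (1 / 2) 1 := ⟨hωa 1 h1, hω1, hω'1, hω''⟩
  exact (hω.eventually_nhdsLT_lt (by norm_num) (by norm_num)).and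
    (by simpa using ((HasJet2At.id 1).mul hρ).eventually_nhdsLT_gt (by norm_num) (by norm_num))

theorem EPSys.deriv_omega_neg {ρ ω : ℝ → ℝ} {c : ℝ} (hsys : EPSys 2 ρ ω c) (hc₀ : 0 < c)
    (hc₁ : c < 1) (hω : ω c = 1 / 2) (hq : c * ρ c ≤ 1 / 2) : deriv ω c < 0 := by
  have hD : 0 < 1 - c ^ 2 := by nlinarith
  have hformula :
      deriv ω c = -((1 - c) ^ 2 + 2 * c * (1 - 2 * (c * ρ c))) / (2 * c * (1 - c ^ 2)) := by
    rw [hsys.2, hω]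
    field_simp
    ring
  rw [hformula]
  apply div_neg_of_neg_of_pos _ (by positivity)
  nlinarith

theorem EPSys.deriv_mul_rho_pos {ρ ω : ℝ → ℝ} {c : ℝ} (hsys : EPSys 2 ρ ω c) (hc₀ : 0 < c)
    (hD : 0 < 1 - 2 ^ 2 * c ^ 2 * ω c ^ 2) (hq : c * ρ c = 1 / 2) :
    0 < ρ c + c * deriv ρ c := by
  have hρ : ρ c = 1 / (2 * c) := by field_simp; linarith
  have hformula : ρ c + c * deriv ρ c =
      2 * (c * ω c - 1 / 2) ^ 2 / (c * (1 - 2 ^ 2 * c ^ 2 * ω c ^ 2)) := by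
    rw [hsys.1, hρ]
    field_simp
    ring
  have hsonic : c * ω c - 1 / 2 ≠ 0 := sub_ne_zero.2 fun h => by nlinarith
  rw [hformula]
  positivity

theorem EPSys.min_ne_zero_of_trapped_right {ρ ω : ℝ → ℝ} {c : ℝ} (hsys : EPSys 2 ρ ω c)
    (hρ : DifferentiableAt ℝ ρ c) (hc₀ : 0 < c) (hc₁ : c < 1)
    (hD : 0 < 1 - 2 ^ 2 * c ^ 2 * ω c ^ 2)
    (hright : ∀ z ∈ Ioo c 1, 1 / 2 < ω z ∧ z * ρ z < 1 / 2) :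
    min (ω c - 1 / 2) (1 / 2 - c * ρ c) ≠ 0 := by
  intro h0
  have hω : 0 ≤ ω c - 1 / 2 := h0 ▸ min_le_left _ _
  have hq : 0 ≤ 1 / 2 - c * ρ c := h0 ▸ min_le_right _ _
  rcases min_choice (ω c - 1 / 2) (1 / 2 - c * ρ c) with hmin | hmin <;> rw [hmin] at h0
  · refine (hsys.deriv_omega_neg hc₀ hc₁ (by linarith) (by linarith)).not_ge ?_
    exact deriv_nonneg_of_forall_Ioo_ge hc₁ fun z hz => by linarith [(hright z hz).1]
  · refine (hsys.deriv_mul_rho_pos hc₀ hD (by linarith)).not_ge ?_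
    have hq' : HasDerivAt (fun z => z * ρ z) (ρ c + c * deriv ρ c) c := by
      simpa using (hasDerivAt_id' c).fun_mul hρ.hasDerivAt
    rw [← hq'.deriv]
    exact deriv_nonpos_of_forall_Ioo_le hc₁ fun z hz => by linarith [(hright z hz).2]

/-- For `y* = 2`, the relative velocity of the inner LP-type solution stays above `1/2`. -/
theorem omega_above_half_for_ystar_two
    (z₀ : ℝ) (hz₀ : z₀ ∈ Set.Ico (0 : ℝ) 1)
    (ρ ω : ℝ → ℝ) (h : InnerLPSol 2 z₀ ρ ω) :
    ∀ z ∈ Set.Ioo z₀ 1, 1 / 2 < ω z := by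
  have hnear := h.eventually_trapped_nhdsLT_one
  obtain ⟨-, -, -, -, -, -, -, hsys, hD⟩ := h
  have hgap : ∀ z ∈ Ioo z₀ 1, 0 < min (ω z - 1 / 2) (1 / 2 - z * ρ z) := by
    refine forall_Ioo_pos_of_eventually_nhdsLT_pos (fun z hz => ?_) ?_ fun c hc hright => ?_
    · obtain ⟨hρ, hω, -⟩ := hsys z hz
      have := hρ.continuousAt
      have := hω.continuousAt
      exact ContinuousAt.continuousWithinAt (by fun_prop)
    · filter_upwards [hnear] with z hz
      exact lt_min (by linarith [hz.1]) (by linarith [hz.2])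
    · refine (hsys c hc).2.2.min_ne_zero_of_trapped_right (hsys c hc).1
        (hz₀.1.trans_lt hc.1) hc.2 (hD c hc) fun z hz => ?_
      have := lt_min_iff.1 (hright z hz)
      constructor <;> linarith
  exact fun z hz => by linarith [(lt_min_iff.1 (hgap z hz)).1]
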